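/- Let S be a finite set of vectors in ℝᵈ with positive definite sample covariance V(S), partitioned into nonempty sets G and Q, and let P be an orthogonal projection matrix on ℝᵈ. Then ‖P·V(S)^{−1/2}·(μ(G)−μ(S))‖₂² ≤ |Q|/|G|. -/

import Mathlib

/-- Sample mean of the vectors `y i` for `i` in a finite set `T`. -/
noncomputable def sampleMean {ι : Type*} {d : ℕ} (y : ι → Fin d → ℝ) (T : Finset ι) :
    Fin d → ℝ :=
  (T.card : ℝ)⁻¹ • ∑ i ∈ T, y i

/-- Sample covariance matrix of the vectors `y i` for `i` in a finite set `T`. -/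
noncomputable def sampleCov {ι : Type*} {d : ℕ} (y : ι → Fin d → ℝ) (T : Finset ι) :
    Matrix (Fin d) (Fin d) ℝ :=
  (T.card : ℝ)⁻¹ • ∑ i ∈ T,
    Matrix.vecMulVec (y i - sampleMean y T) (y i - sampleMean y T)

/-!
Write `m = μ(G) - μ(S)` and, for a direction `x`, `aᵢ = ⟪yᵢ - μ(S), x⟫`. These numbers sum to zero
over `S = G ∪ Q`, so `∑_G aᵢ = -∑_Q aᵢ`, and Cauchy–Schwarz on `G` and on `Q` gives
`⟪m, x⟫² ≤ (|Q| / |G|) · xᵀ V(S) x`. For `x = W² m` both `⟪m, x⟫` and `xᵀ V(S) x` equal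
`t = ‖W m‖²` because `W V(S) W = 1`, so `t² ≤ (|Q| / |G|) · t`; finally, the orthogonal projection
`P` does not increase the norm.
-/

open Matrix Finset

section SampleStatistics

variable {ι : Type*} {d : ℕ} (y : ι → Fin d → ℝ)

lemma sum_sub_sampleMean {T : Finset ι} (hT : T.Nonempty) :
    ∑ i ∈ T, (y i - sampleMean y T) = 0 := by
  have hT₀ : (#T : ℝ) ≠ 0 := Nat.cast_ne_zero.mpr hT.card_pos.ne'
  rw [sum_sub_distrib, sum_const, sampleMean, ← Nat.cast_smul_eq_nsmul ℝ, smul_smul,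
    mul_inv_cancel₀ hT₀, one_smul, sub_self]

lemma sampleMean_sub_eq_smul_sum {T : Finset ι} (hT : T.Nonempty) (c : Fin d → ℝ) :
    sampleMean y T - c = (#T : ℝ)⁻¹ • ∑ i ∈ T, (y i - c) := by
  have hT₀ : (#T : ℝ) ≠ 0 := Nat.cast_ne_zero.mpr hT.card_pos.ne'
  rw [sum_sub_distrib, sum_const, smul_sub, ← Nat.cast_smul_eq_nsmul ℝ, smul_smul,
    inv_mul_cancel₀ hT₀, one_smul, sampleMean]

lemma dotProduct_sampleCov_mulVec (T : Finset ι) (x : Fin d → ℝ) :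
    x ⬝ᵥ sampleCov y T *ᵥ x = (#T : ℝ)⁻¹ * ∑ i ∈ T, ((y i - sampleMean y T) ⬝ᵥ x) ^ 2 := by
  rw [sampleCov, smul_mulVec, dotProduct_smul, smul_eq_mul, sum_mulVec, dotProduct_sum]
  congr 1
  refine sum_congr rfl fun i _ ↦ ?_
  rw [vecMulVec_mulVec, op_smul_eq_smul, dotProduct_smul, smul_eq_mul, dotProduct_comm, sq]

end SampleStatistics

lemma sq_sum_mul_card_union_le {ι R : Type*} [CommRing R] [LinearOrder R] [IsStrictOrderedRing R]
    [DecidableEq ι] {G Q : Finset ι} (hGQ : Disjoint G Q) {a : ι → R}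
    (ha : ∑ i ∈ G ∪ Q, a i = 0) :
    (∑ i ∈ G, a i) ^ 2 * #(G ∪ Q) ≤ #G * #Q * ∑ i ∈ G ∪ Q, a i ^ 2 := by
  rw [sum_union hGQ] at ha
  have hG := sq_sum_le_card_mul_sum_sq (s := G) (f := a)
  have hQ := sq_sum_le_card_mul_sum_sq (s := Q) (f := a)
  rw [← neg_eq_of_add_eq_zero_right ha, neg_sq] at hQ
  rw [card_union_of_disjoint hGQ, sum_union hGQ]
  push_cast
  linear_combination (#Q : R) * hG + (#G : R) * hQ

lemma sq_dotProduct_sampleMean_sub_le {ι : Type*} [DecidableEq ι] {d : ℕ} (y : ι → Fin d → ℝ)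
    {G Q : Finset ι} (hGQ : Disjoint G Q) (hG : G.Nonempty) (x : Fin d → ℝ) :
    ((sampleMean y G - sampleMean y (G ∪ Q)) ⬝ᵥ x) ^ 2 ≤
      #Q / #G * (x ⬝ᵥ sampleCov y (G ∪ Q) *ᵥ x) := by
  set a : ι → ℝ := fun i ↦ (y i - sampleMean y (G ∪ Q)) ⬝ᵥ x
  have hS : (G ∪ Q).Nonempty := hG.mono subset_union_left
  have ha : ∑ i ∈ G ∪ Q, a i = 0 := by
    rw [← sum_dotProduct, sum_sub_sampleMean y hS, zero_dotProduct]
  have hmean : (sampleMean y G - sampleMean y (G ∪ Q)) ⬝ᵥ x = (#G : ℝ)⁻¹ * ∑ i ∈ G, a i := by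
    rw [sampleMean_sub_eq_smul_sum y hG, smul_dotProduct, sum_dotProduct, smul_eq_mul]
  have hGpos : (0 : ℝ) < #G := by exact_mod_cast hG.card_pos
  have hSpos : (0 : ℝ) < #(G ∪ Q) := by exact_mod_cast hS.card_pos
  have hcs := sq_sum_mul_card_union_le hGQ ha
  rw [hmean, dotProduct_sampleCov_mulVec]
  field_simp
  linarith

section QuadraticForms

variable {n R : Type*} [Fintype n] [CommRing R]

lemma IsStarProjection.mulVec_dotProduct_mulVec [StarRing R] [TrivialStar R] {P : Matrix n n R}
    (hP : IsStarProjection P) (v : n → R) :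
    P *ᵥ v ⬝ᵥ P *ᵥ v = v ⬝ᵥ P *ᵥ v := by
  have hPt : Pᵀ = P := by simpa [IsSelfAdjoint, star_eq_conjTranspose] using hP.isSelfAdjoint
  rw [← dotProduct_transpose_mulVec, mulVec_mulVec, hPt, hP.isIdempotentElem.eq]

variable [LinearOrder R] [IsStrictOrderedRing R]

lemma IsStarProjection.mulVec_dotProduct_mulVec_le [StarRing R] [TrivialStar R]
    {P : Matrix n n R} (hP : IsStarProjection P) (v : n → R) :
    P *ᵥ v ⬝ᵥ P *ᵥ v ≤ v ⬝ᵥ v := by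
  have h : 0 ≤ (v - P *ᵥ v) ⬝ᵥ (v - P *ᵥ v) := Fintype.sum_nonneg fun _ ↦ mul_self_nonneg _
  rw [sub_dotProduct, dotProduct_sub, dotProduct_sub, dotProduct_comm (P *ᵥ v) v,
    ← hP.mulVec_dotProduct_mulVec] at h
  linarith

lemma dotProduct_mulVec_self_le_of_sq_dotProduct_le [DecidableEq n] {V W : Matrix n n R}
    (hW : W.IsSymm) (hWVW : W * V * W = 1) {m : n → R} {c : R} (hc : 0 ≤ c)
    (h : ∀ x, (m ⬝ᵥ x) ^ 2 ≤ c * (x ⬝ᵥ V *ᵥ x)) :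
    W *ᵥ m ⬝ᵥ W *ᵥ m ≤ c := by
  set u := W *ᵥ m
  have hm : m ⬝ᵥ W *ᵥ u = u ⬝ᵥ u := by
    rw [dotProduct_mulVec, ← mulVec_transpose, hW.eq]
  have hV : W *ᵥ u ⬝ᵥ V *ᵥ (W *ᵥ u) = u ⬝ᵥ u := by
    rw [dotProduct_comm, ← dotProduct_transpose_mulVec, hW.eq, mulVec_mulVec, mulVec_mulVec, hWVW,
      one_mulVec]
  have hu : (u ⬝ᵥ u) ^ 2 ≤ c * (u ⬝ᵥ u) := by simpa only [hm, hV] using h (W *ᵥ u)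
  have hu₀ : 0 ≤ u ⬝ᵥ u := Fintype.sum_nonneg fun _ ↦ mul_self_nonneg _
  nlinarith

end QuadraticForms

theorem projected_whitened_mean_bound_general {ι : Type*} [DecidableEq ι] {d : ℕ}
    (y : ι → Fin d → ℝ) (S G Q : Finset ι) (hdisj : Disjoint G Q) (hS : S = G ∪ Q)
    (hG : G.Nonempty)
    (W : Matrix (Fin d) (Fin d) ℝ) (hW : W.PosDef)
    (hWVW : W * sampleCov y S * W = 1)
    (P : Matrix (Fin d) (Fin d) ℝ) (hPsym : P.IsHermitian) (hPproj : P * P = P) :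
    ∑ j, ((P.mulVec (W.mulVec (sampleMean y G - sampleMean y S))) j) ^ 2 ≤
      (Q.card : ℝ) / (G.card : ℝ) := by
  subst hS
  set v := W *ᵥ (sampleMean y G - sampleMean y (G ∪ Q))
  have hP : IsStarProjection P := ⟨hPproj, hPsym⟩
  calc ∑ j, (P *ᵥ v) j ^ 2 = P *ᵥ v ⬝ᵥ P *ᵥ v := by simp only [dotProduct, sq]
    _ ≤ v ⬝ᵥ v := hP.mulVec_dotProduct_mulVec_le v
    _ ≤ #Q / #G :=
      dotProduct_mulVec_self_le_of_sq_dotProduct_le (isHermitian_iff_isSymm.mp hW.isHermitian)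
        hWVW (by positivity) (sq_dotProduct_sampleMean_sub_le y hdisj hG)

theorem projected_whitened_mean_bound {ι : Type*} [DecidableEq ι] {d : ℕ}
    (y : ι → Fin d → ℝ) (S G Q : Finset ι) (hdisj : Disjoint G Q) (hS : S = G ∪ Q)
    (hG : G.Nonempty) (hQ : Q.Nonempty)
    (hV : (sampleCov y S).PosDef)
    (W : Matrix (Fin d) (Fin d) ℝ) (hW : W.PosDef)
    (hWVW : W * sampleCov y S * W = 1)
    (P : Matrix (Fin d) (Fin d) ℝ) (hPsym : P.IsHermitian) (hPproj : P * P = P) :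
    ∑ j, ((P.mulVec (W.mulVec (sampleMean y G - sampleMean y S))) j) ^ 2 ≤
      (Q.card : ℝ) / (G.card : ℝ) :=
  projected_whitened_mean_bound_general y S G Q hdisj hS hG W hW hWVW P hPsym hPproj
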